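/- Let μ be a Borel probability measure on ℝ with finite second moment and variance σ². Then for all z, z′ in the upper half-plane ℂ⁺, |(F_μ(z) − F_μ(z′))/(z − z′) − 1| ≤ σ²/(Im z · Im z′) whenever z ≠ z′; equivalently, F_μ(z) − F_μ(z′) = (z − z′)·(1 + τ) for some τ ∈ ℂ with |τ| ≤ σ²/(Im z · Im z′). -/

import Mathlib

open MeasureTheory

noncomputable section

/-- The Stieltjes transform of a measure on `ℝ`. -/
def stT (μ : Measure ℝ) (z : ℂ) : ℂ := ∫ t, ((t : ℂ) - z)⁻¹ ∂μ

/-- The reciprocal Cauchy transform `F_μ = −1/m_μ`. -/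
def Ffun (μ : Measure ℝ) (z : ℂ) : ℂ := -(stT μ z)⁻¹

/-!
For `Im z > 0` put `y_z(t) = 1 + F_μ(z) / (t - z) = 1 - (t - z)⁻¹ / m_μ(z)`, a bounded function with
`∫ y_z dμ = 0`. The resolvent identity turns `∫ y_z y_{z'} dμ` into
`(F_μ(z) - F_μ(z')) / (z - z') - 1`, so by Cauchy–Schwarz it suffices to show
`Im z · ‖y_z‖₂ ≤ σ`. Since `y_z(t) (t - z) = t - z + F_μ(z)`, for every real `a`
`(t - a) ȳ_z(t) = |y_z(t)|² (t - z) - (a - z + F_μ(z)) ȳ_z(t)`; integrating and taking imaginary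
parts gives `Im z · ‖y_z‖₂² = -Im ∫ (t - a) ȳ_z dμ ≤ ‖t - a‖₂ ‖y_z‖₂`, and `a` = the mean gives
`‖t - a‖₂ = σ`.
-/

open Complex ComplexConjugate ProbabilityTheory

lemma norm_integral_mul_le_sqrt_mul_sqrt {α 𝕜 : Type*} [MeasurableSpace α] {μ : Measure α}
    [RCLike 𝕜] {f g : α → 𝕜} (hf : MemLp f 2 μ) (hg : MemLp g 2 μ) :
    ‖∫ a, f a * g a ∂μ‖ ≤ √(∫ a, ‖f a‖ ^ 2 ∂μ) * √(∫ a, ‖g a‖ ^ 2 ∂μ) := by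
  have hfg : Integrable (fun a => ‖f a‖ * ‖g a‖) μ := hf.norm.integrable_mul hg.norm
  calc ‖∫ a, f a * g a ∂μ‖ ≤ ∫ a, ‖f a‖ * ‖g a‖ ∂μ :=
        norm_integral_le_of_norm_le hfg (.of_forall fun a => norm_mul_le _ _)
    _ ≤ _ := by
        simpa [Real.sqrt_eq_rpow, Real.rpow_two] using
          integral_mul_norm_le_Lp_mul_Lq Real.HolderConjugate.two_two
            (by simpa using hf) (by simpa using hg)

lemma im_le_norm_ofReal_sub (z : ℂ) (t : ℝ) : z.im ≤ ‖(t : ℂ) - z‖ := by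
  simpa using (neg_le_abs _).trans (abs_im_le_norm ((t : ℂ) - z))

section Resolvent

variable {μ : Measure ℝ} {z : ℂ}

lemma ofReal_sub_ne_zero (hz : 0 < z.im) (t : ℝ) : (t : ℂ) - z ≠ 0 :=
  norm_pos_iff.1 (hz.trans_le (im_le_norm_ofReal_sub z t))

lemma norm_inv_ofReal_sub_le (hz : 0 < z.im) (t : ℝ) : ‖((t : ℂ) - z)⁻¹‖ ≤ z.im⁻¹ := by
  rw [norm_inv]
  exact inv_anti₀ hz (im_le_norm_ofReal_sub z t)

lemma im_inv_ofReal_sub_pos (hz : 0 < z.im) (t : ℝ) : 0 < (((t : ℂ) - z)⁻¹).im := by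
  rw [inv_im, sub_im, ofReal_im, zero_sub, neg_neg]
  exact div_pos hz (normSq_pos.2 (ofReal_sub_ne_zero hz t))

lemma continuous_inv_ofReal_sub (hz : 0 < z.im) : Continuous fun t : ℝ => ((t : ℂ) - z)⁻¹ :=
  (continuous_ofReal.sub continuous_const).inv₀ (ofReal_sub_ne_zero hz)

lemma memLp_inv_ofReal_sub [IsFiniteMeasure μ] (hz : 0 < z.im) (p : ENNReal) :
    MemLp (fun t : ℝ => ((t : ℂ) - z)⁻¹) p μ :=
  .of_bound (continuous_inv_ofReal_sub hz).aestronglyMeasurable _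
    (.of_forall (norm_inv_ofReal_sub_le hz))

lemma integrable_inv_ofReal_sub [IsFiniteMeasure μ] (hz : 0 < z.im) :
    Integrable (fun t : ℝ => ((t : ℂ) - z)⁻¹) μ :=
  memLp_one_iff_integrable.1 (memLp_inv_ofReal_sub hz 1)

lemma stT_im_pos [IsFiniteMeasure μ] [NeZero μ] (hz : 0 < z.im) : 0 < (stT μ z).im := by
  have hr := integrable_inv_ofReal_sub (μ := μ) hz
  rw [stT, ← RCLike.im_to_complex, ← integral_im hr]
  refine (integral_pos_iff_support_of_nonneg (fun t => (im_inv_ofReal_sub_pos hz t).le)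
    hr.im).2 ?_
  rw [Function.support_eq_univ fun t => (im_inv_ofReal_sub_pos hz t).ne']
  exact Measure.measure_univ_pos.2 (NeZero.ne μ)

lemma stT_ne_zero [IsFiniteMeasure μ] [NeZero μ] (hz : 0 < z.im) : stT μ z ≠ 0 :=
  fun h => (stT_im_pos (μ := μ) hz).ne' (by rw [h, zero_im])

end Resolvent

def centeredResolvent (μ : Measure ℝ) (z : ℂ) (t : ℝ) : ℂ := 1 + Ffun μ z * ((t : ℂ) - z)⁻¹

section CenteredResolvent

variable {μ : Measure ℝ} {z z' : ℂ}

lemma norm_centeredResolvent_le (hz : 0 < z.im) (t : ℝ) :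
    ‖centeredResolvent μ z t‖ ≤ 1 + ‖Ffun μ z‖ * z.im⁻¹ := by
  refine (norm_add_le _ _).trans ?_
  rw [norm_one, norm_mul]
  gcongr
  exact norm_inv_ofReal_sub_le hz t

lemma continuous_centeredResolvent (hz : 0 < z.im) : Continuous (centeredResolvent μ z) :=
  continuous_const.add (continuous_const.mul (continuous_inv_ofReal_sub hz))

lemma memLp_centeredResolvent [IsFiniteMeasure μ] (hz : 0 < z.im) (p : ENNReal) :
    MemLp (centeredResolvent μ z) p μ :=
  .of_bound (continuous_centeredResolvent hz).aestronglyMeasurable _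
    (.of_forall (norm_centeredResolvent_le hz))

lemma integrable_centeredResolvent [IsFiniteMeasure μ] (hz : 0 < z.im) :
    Integrable (centeredResolvent μ z) μ :=
  memLp_one_iff_integrable.1 (memLp_centeredResolvent hz 1)

lemma integral_centeredResolvent [IsProbabilityMeasure μ] (hz : 0 < z.im) :
    ∫ t, centeredResolvent μ z t ∂μ = 0 := by
  simp only [centeredResolvent]
  rw [integral_add (integrable_const _)
    ((integrable_inv_ofReal_sub hz).const_mul _), integral_const_mul, ← stT, Ffun,
    integral_const, probReal_univ, one_smul, neg_mul, inv_mul_cancel₀ (stT_ne_zero hz),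
    add_neg_cancel]

lemma centeredResolvent_mul_ofReal_sub (hz : 0 < z.im) (t : ℝ) :
    centeredResolvent μ z t * ((t : ℂ) - z) = (t : ℂ) - z + Ffun μ z := by
  rw [centeredResolvent, add_mul, one_mul, mul_assoc, inv_mul_cancel₀ (ofReal_sub_ne_zero hz t),
    mul_one]

lemma stT_sub_stT [IsFiniteMeasure μ] (hz : 0 < z.im) (hz' : 0 < z'.im) :
    stT μ z - stT μ z' = (z - z') * ∫ t, ((t : ℂ) - z)⁻¹ * ((t : ℂ) - z')⁻¹ ∂μ := by
  rw [stT, stT, ← integral_sub (integrable_inv_ofReal_sub hz) (integrable_inv_ofReal_sub hz'),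
    ← integral_const_mul]
  refine integral_congr_ae (.of_forall fun t => ?_)
  have := ofReal_sub_ne_zero hz t
  have := ofReal_sub_ne_zero hz' t
  field_simp
  ring

lemma integral_centeredResolvent_mul [IsProbabilityMeasure μ] (hz : 0 < z.im) (hz' : 0 < z'.im)
    (hne : z ≠ z') :
    ∫ t, centeredResolvent μ z t * centeredResolvent μ z' t ∂μ
      = (Ffun μ z - Ffun μ z') / (z - z') - 1 := by
  set y := centeredResolvent μ z
  set y' := centeredResolvent μ z'
  set F := Ffun μ z
  set F' := Ffun μ z'
  have hpt (t : ℝ) :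
      y t * y' t = y t + y' t - 1 + F * F' * (((t : ℂ) - z)⁻¹ * ((t : ℂ) - z')⁻¹) := by
    simp only [y, y', centeredResolvent]
    ring
  have hy := integrable_centeredResolvent (μ := μ) hz
  have hy' := integrable_centeredResolvent (μ := μ) hz'
  have hsum : Integrable (fun t => y t + y' t) μ := hy.add hy'
  have hsum1 : Integrable (fun t => y t + y' t - 1) μ := hsum.sub (integrable_const 1)
  have hrr : Integrable (fun t : ℝ => F * F' * (((t : ℂ) - z)⁻¹ * ((t : ℂ) - z')⁻¹)) μ :=
    ((integrable_inv_ofReal_sub hz).mul_of_top_left (memLp_inv_ofReal_sub hz' ⊤)).const_mul _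
  have hI : ∫ t, ((t : ℂ) - z)⁻¹ * ((t : ℂ) - z')⁻¹ ∂μ = (stT μ z - stT μ z') / (z - z') := by
    rw [stT_sub_stT hz hz', mul_div_cancel_left₀ _ (sub_ne_zero.2 hne)]
  simp_rw [hpt]
  rw [integral_add hsum1 hrr, integral_sub hsum (integrable_const 1), integral_add hy hy',
    integral_centeredResolvent hz, integral_centeredResolvent hz', integral_const_mul, hI]
  have := stT_ne_zero (μ := μ) hz
  have := stT_ne_zero (μ := μ) hz'
  have := sub_ne_zero.2 hne
  simp only [F, F', Ffun, integral_const, probReal_univ, one_smul]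
  field_simp
  ring

lemma integrable_ofReal_norm_sq_centeredResolvent_mul [IsFiniteMeasure μ]
    (hX : Integrable (fun t : ℝ => t) μ) (hz : 0 < z.im) :
    Integrable (fun t : ℝ => ((‖centeredResolvent μ z t‖ ^ 2 : ℝ) : ℂ) * ((t : ℂ) - z)) μ :=
  (hX.ofReal.sub (integrable_const z)).bdd_mul
    (continuous_ofReal.comp ((continuous_centeredResolvent hz).norm.pow 2)).aestronglyMeasurable
    (.of_forall fun t => by
      rw [norm_real, Real.norm_of_nonneg (by positivity)]
      exact pow_le_pow_left₀ (norm_nonneg _) (norm_centeredResolvent_le hz t) 2)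

lemma integral_ofReal_sub_mul_conj_centeredResolvent [IsProbabilityMeasure μ]
    (hX : Integrable (fun t : ℝ => t) μ) (hz : 0 < z.im) (a : ℝ) :
    ∫ t, ((t : ℂ) - a) * conj (centeredResolvent μ z t) ∂μ
      = ∫ t, ((‖centeredResolvent μ z t‖ ^ 2 : ℝ) : ℂ) * ((t : ℂ) - z) ∂μ := by
  set y := centeredResolvent μ z
  have hpt : ∀ t : ℝ, ((t : ℂ) - a) * conj (y t)
      = ((‖y t‖ ^ 2 : ℝ) : ℂ) * ((t : ℂ) - z) - (a - z + Ffun μ z) * conj (y t) := fun t => by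
    have hy : y t * ((t : ℂ) - z) = (t : ℂ) - z + Ffun μ z := centeredResolvent_mul_ofReal_sub hz t
    rw [ofReal_pow, ← conj_mul']
    linear_combination -conj (y t) * hy
  have hyc : Integrable (fun t => conj (y t)) μ :=
    memLp_one_iff_integrable.1 (memLp_centeredResolvent hz 1).star
  simp_rw [hpt]
  rw [integral_sub (integrable_ofReal_norm_sq_centeredResolvent_mul hX hz) (hyc.const_mul _),
    integral_const_mul, integral_conj, integral_centeredResolvent hz, map_zero, mul_zero, sub_zero]

lemma im_mul_sqrt_integral_norm_sq_centeredResolvent_le [IsProbabilityMeasure μ]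
    (hX : MemLp (fun t : ℝ => t) 2 μ) (hz : 0 < z.im) (a : ℝ) :
    z.im * √(∫ t, ‖centeredResolvent μ z t‖ ^ 2 ∂μ) ≤ √(∫ t, (t - a) ^ 2 ∂μ) := by
  set y := centeredResolvent μ z
  set N := ∫ t, ‖y t‖ ^ 2 ∂μ
  have hX1 := hX.integrable one_le_two
  have him : z.im * N = -(∫ t, ((t : ℂ) - a) * conj (y t) ∂μ).im := by
    have hsq := integral_im (integrable_ofReal_norm_sq_centeredResolvent_mul hX1 hz)
    simp only [RCLike.im_to_complex, im_ofReal_mul, sub_im, ofReal_im, zero_sub] at hsq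
    rw [integral_ofReal_sub_mul_conj_centeredResolvent hX1 hz a, ← hsq, integral_mul_const]
    ring
  have hCS : ‖∫ t, ((t : ℂ) - a) * conj (y t) ∂μ‖ ≤ √(∫ t, (t - a) ^ 2 ∂μ) * √N := by
    have h := norm_integral_mul_le_sqrt_mul_sqrt
      ((hX.sub (memLp_const a)).ofReal) (memLp_centeredResolvent hz 2).star
    simpa [← ofReal_sub, norm_real, sq_abs] using h
  have hbound : z.im * N ≤ √(∫ t, (t - a) ^ 2 ∂μ) * √N :=
    him ▸ (neg_le_abs _).trans ((abs_im_le_norm _).trans hCS)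
  rcases (Real.sqrt_nonneg N).eq_or_lt with h0 | hpos
  · rw [← h0, mul_zero]
    exact Real.sqrt_nonneg _
  · refine le_of_mul_le_mul_right ?_ hpos
    rwa [mul_assoc, Real.mul_self_sqrt (integral_nonneg fun t => sq_nonneg _)]

lemma norm_Ffun_slope_sub_one_le [IsProbabilityMeasure μ] (hX : MemLp (fun t : ℝ => t) 2 μ)
    (hz : 0 < z.im) (hz' : 0 < z'.im) (hne : z ≠ z') :
    ‖(Ffun μ z - Ffun μ z') / (z - z') - 1‖ ≤ variance (fun t => t) μ / (z.im * z'.im) := by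
  have hsqrt {w : ℂ} (hw : 0 < w.im) :
      w.im * √(∫ t, ‖centeredResolvent μ w t‖ ^ 2 ∂μ) ≤ √(variance (fun t => t) μ) := by
    rw [variance_eq_integral aemeasurable_id']
    exact im_mul_sqrt_integral_norm_sq_centeredResolvent_le hX hw _
  rw [← integral_centeredResolvent_mul hz hz' hne, le_div_iff₀ (mul_pos hz hz')]
  calc _ ≤ √(∫ t, ‖centeredResolvent μ z t‖ ^ 2 ∂μ)
        * √(∫ t, ‖centeredResolvent μ z' t‖ ^ 2 ∂μ) * (z.im * z'.im) := by
        gcongr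
        exact norm_integral_mul_le_sqrt_mul_sqrt (memLp_centeredResolvent hz 2)
          (memLp_centeredResolvent hz' 2)
    _ = (z.im * √(∫ t, ‖centeredResolvent μ z t‖ ^ 2 ∂μ))
        * (z'.im * √(∫ t, ‖centeredResolvent μ z' t‖ ^ 2 ∂μ)) := by ring
    _ ≤ √(variance (fun t => t) μ) * √(variance (fun t => t) μ) :=
        mul_le_mul (hsqrt hz) (hsqrt hz') (by positivity) (Real.sqrt_nonneg _)
    _ = variance (fun t => t) μ := Real.mul_self_sqrt (variance_nonneg _ _)

end CenteredResolvent

theorem statement_9 (μ : Measure ℝ) [IsProbabilityMeasure μ]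
    (hint : Integrable (fun t : ℝ => t ^ 2) μ)
    (σ2 : ℝ) (hσ2 : σ2 = (∫ t, t ^ 2 ∂μ) - (∫ t, t ∂μ) ^ 2) :
    (∀ z z' : ℂ, 0 < z.im → 0 < z'.im → z ≠ z' →
        ‖(Ffun μ z - Ffun μ z') / (z - z') - 1‖ ≤ σ2 / (z.im * z'.im)) ∧
      ∀ z z' : ℂ, 0 < z.im → 0 < z'.im →
        ∃ τ : ℂ, Ffun μ z - Ffun μ z' = (z - z') * (1 + τ) ∧
          ‖τ‖ ≤ σ2 / (z.im * z'.im) := by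
  have hX : MemLp (fun t : ℝ => t) 2 μ :=
    (memLp_two_iff_integrable_sq aestronglyMeasurable_id).2 hint
  have hvar : σ2 = variance (fun t => t) μ := by
    rw [hσ2, variance_eq_sub hX]
    rfl
  have hquot (z z' : ℂ) (hz : 0 < z.im) (hz' : 0 < z'.im) (hne : z ≠ z') :
      ‖(Ffun μ z - Ffun μ z') / (z - z') - 1‖ ≤ σ2 / (z.im * z'.im) :=
    hvar ▸ norm_Ffun_slope_sub_one_le hX hz hz' hne
  refine ⟨hquot, fun z z' hz hz' => ?_⟩
  rcases eq_or_ne z z' with rfl | hne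
  · refine ⟨0, by ring, ?_⟩
    rw [norm_zero, hvar]
    exact div_nonneg (variance_nonneg _ _) (mul_pos hz hz').le
  · refine ⟨_, ?_, hquot z z' hz hz' hne⟩
    field_simp [sub_ne_zero.2 hne]
    ring
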